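/- For a finite group G ⊆ GL(n, ℝ) of order g, the invariant ring ℂ[x₁,…,xₙ]^G is generated as a ℂ-algebra by the Reynolds averages (1/g)Σ_{M∈G} M·f, as f ranges over all monomials in x₁,…,xₙ of degree at most g. -/

import Mathlib

open Matrix MvPolynomial

noncomputable section

def glAct {n : ℕ} (M : Matrix.GeneralLinearGroup (Fin n) ℝ) :
    MvPolynomial (Fin n) ℂ →ₐ[ℂ] MvPolynomial (Fin n) ℂ :=
  aeval (fun i => ∑ j, (((((M⁻¹ : Matrix.GeneralLinearGroup (Fin n) ℝ) :
    Matrix (Fin n) (Fin n) ℝ) i j : ℝ) : ℂ)) • (X j : MvPolynomial (Fin n) ℂ))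

lemma glAct_X {n : ℕ} (M : Matrix.GeneralLinearGroup (Fin n) ℝ) (i : Fin n) :
    glAct M (X i) = ∑ j, (((((M⁻¹ : Matrix.GeneralLinearGroup (Fin n) ℝ) :
      Matrix (Fin n) (Fin n) ℝ) i j : ℝ) : ℂ)) • (X j : MvPolynomial (Fin n) ℂ) := by
  simp [glAct]

lemma glAct_mul {n : ℕ} (M N : Matrix.GeneralLinearGroup (Fin n) ℝ)
    (f : MvPolynomial (Fin n) ℂ) : glAct M (glAct N f) = glAct (M * N) f := by
  have h : (glAct M).comp (glAct N) = glAct (M * N) := by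
    apply MvPolynomial.algHom_ext
    intro i
    simp only [AlgHom.comp_apply, glAct_X, map_sum]
    simp only [_root_.map_smul, glAct_X, Finset.smul_sum, smul_smul]
    rw [Finset.sum_comm]
    refine Finset.sum_congr rfl fun k _ => ?_
    rw [← Finset.sum_smul]
    congr 1
    rw [_root_.mul_inv_rev]
    push_cast [Matrix.GeneralLinearGroup.coe_mul, Matrix.mul_apply]
    norm_num
  calc glAct M (glAct N f) = ((glAct M).comp (glAct N)) f := rfl
    _ = glAct (M * N) f := by rw [h]

end

noncomputable section newton

open Finset

variable {A : Type*} [CommRing A] [Algebra ℂ A] {σ : Type*} [Fintype σ] [DecidableEq σ]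

/-- the set of power sums of `b` of degree between 1 and `card σ` -/
def psumSet (b : σ → A) : Set A :=
  {a | ∃ j, 1 ≤ j ∧ j ≤ Fintype.card σ ∧ a = ∑ i, b i ^ j}

lemma aeval_psum (b : σ → A) (k : ℕ) : (aeval b) (psum σ ℂ k) = ∑ i, b i ^ k := by
  simp [psum]

lemma aux_esymm_mem (b : σ → A) (k : ℕ) :
    (aeval b) (esymm σ ℂ k) ∈ Algebra.adjoin ℂ (psumSet b) := by
  induction k using Nat.strong_induction_on with
  | _ k ih =>
  rcases Nat.eq_zero_or_pos k with rfl | hk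
  · rw [esymm_zero, _root_.map_one]; exact (Algebra.adjoin ℂ (psumSet b)).one_mem
  by_cases hkg : k ≤ Fintype.card σ
  · have hN := congrArg (aeval b) (MvPolynomial.mul_esymm_eq_sum σ ℂ k)
    simp only [_root_.map_mul, map_natCast, map_sum, _root_.map_pow, map_neg, _root_.map_one] at hN
    have hsum : ((-1 : A)) ^ (k + 1) *
        ∑ a ∈ antidiagonal k with a.1 < k,
          (-1) ^ a.1 * (aeval b) (esymm σ ℂ a.1) * (aeval b) (psum σ ℂ a.2) ∈
        Algebra.adjoin ℂ (psumSet b) := by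
      refine Subalgebra.mul_mem _ (Subalgebra.pow_mem _ (Subalgebra.neg_mem _
        (Subalgebra.one_mem _)) _) (Subalgebra.sum_mem _ fun a ha => ?_)
      simp only [Finset.mem_filter, Finset.HasAntidiagonal.mem_antidiagonal] at ha
      refine Subalgebra.mul_mem _ (Subalgebra.mul_mem _
        (Subalgebra.pow_mem _ (Subalgebra.neg_mem _ (Subalgebra.one_mem _)) _)
        (ih a.1 ha.2)) ?_
      · rw [aeval_psum]
        rcases Nat.eq_zero_or_pos a.2 with h2 | h2
        · omega
        · exact Algebra.subset_adjoin ⟨a.2, h2, by omega, rfl⟩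
    have : ((k : A)) * (aeval b) (esymm σ ℂ k) ∈ Algebra.adjoin ℂ (psumSet b) := by
      rw [hN]; convert hsum using 2
    have hk' : ((k : ℂ)) • (aeval b) (esymm σ ℂ k) ∈ Algebra.adjoin ℂ (psumSet b) := by
      rwa [Algebra.smul_def, map_natCast]
    have := Subalgebra.smul_mem _ hk' ((k : ℂ))⁻¹
    rwa [smul_smul, inv_mul_cancel₀ (by exact_mod_cast hk.ne'), one_smul] at this
  · have : esymm σ ℂ k = 0 := by
      rw [esymm, Finset.powersetCard_eq_empty.2 (by simpa using not_le.mp hkg),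
        Finset.sum_empty]
    rw [this, map_zero]
    exact Subalgebra.zero_mem _

lemma aux_psum_mem (b : σ → A) (k : ℕ) :
    (∑ i, b i ^ k) ∈ Algebra.adjoin ℂ (psumSet b) := by
  induction k using Nat.strong_induction_on with
  | _ k ih =>
  rcases Nat.eq_zero_or_pos k with rfl | hk
  · simp only [pow_zero]
    rw [Finset.sum_const, nsmul_eq_mul, mul_one]
    exact Subalgebra.natCast_mem _ _
  by_cases hkg : k ≤ Fintype.card σ
  · exact Algebra.subset_adjoin ⟨k, hk, hkg, rfl⟩
  · have hN := congrArg (aeval b) (MvPolynomial.psum_eq_mul_esymm_sub_sum σ ℂ k hk)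
    rw [aeval_psum] at hN
    simp only [_root_.map_sub, _root_.map_mul, map_natCast, map_sum, _root_.map_pow, map_neg, _root_.map_one] at hN
    rw [hN]
    refine Subalgebra.sub_mem _ (Subalgebra.mul_mem _ (Subalgebra.mul_mem _
      (Subalgebra.pow_mem _ (Subalgebra.neg_mem _ (Subalgebra.one_mem _)) _)
      (Subalgebra.natCast_mem _ _)) (aux_esymm_mem b k))
      (Subalgebra.sum_mem _ fun a ha => ?_)
    simp only [Finset.mem_filter, Finset.HasAntidiagonal.mem_antidiagonal, Set.mem_Ioo] at ha
    refine Subalgebra.mul_mem _ (Subalgebra.mul_mem _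
      (Subalgebra.pow_mem _ (Subalgebra.neg_mem _ (Subalgebra.one_mem _)) _)
      (aux_esymm_mem b a.1)) ?_
    rw [aeval_psum]
    exact ih a.2 (by omega)

end newton

section coeffpow

variable {n : ℕ}

lemma sub_single_add (β : Fin n →₀ ℕ) (i : Fin n) (hi : i ∈ β.support) :
    (β - Finsupp.single i 1) + Finsupp.single i 1 = β := by
  ext j
  simp only [Finsupp.add_apply, Finsupp.tsub_apply, Finsupp.single_apply]
  rcases eq_or_ne i j with rfl | h
  · have h1 : 1 ≤ β i := by
      rw [Finsupp.mem_support_iff] at hi; omega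
    simp only [if_pos rfl, if_true, eq_self_iff_true]
    omega
  · simp [h]

lemma deg_sub_single (β : Fin n →₀ ℕ) (i : Fin n) (hi : i ∈ β.support) :
    ((β - Finsupp.single i 1).sum fun _ e => e) + 1 = β.sum fun _ e => e := by
  conv_rhs => rw [← sub_single_add β i hi]
  rw [Finsupp.sum_add_index' (fun _ => rfl) (fun _ _ _ => rfl),
    Finsupp.sum_single_index rfl]

lemma coeff_sum_X_pow_pos (d : ℕ) (β : Fin n →₀ ℕ) (h : (β.sum fun _ e => e) = d) :
    0 < coeff β ((∑ i, X i : MvPolynomial (Fin n) ℕ) ^ d) := by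
  induction d generalizing β with
  | zero =>
    have hb : β = 0 := by
      have : β.degree = 0 := h
      rwa [Finsupp.degree_eq_zero_iff] at this
    subst hb
    simp [coeff_one]
  | succ d ih =>
    have hb : β ≠ 0 := by
      intro h0; subst h0; simp [Finsupp.sum_zero_index] at h
    obtain ⟨i, hi⟩ := Finsupp.support_nonempty_iff.2 hb
    rw [pow_succ, Finset.mul_sum, MvPolynomial.coeff_sum]
    have hterm : 0 < coeff β ((∑ j, X j : MvPolynomial (Fin n) ℕ) ^ d * X i) := by
      rw [coeff_mul_X', if_pos hi]
      exact ih _ (by have := deg_sub_single β i hi; omega)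
    calc 0 < coeff β ((∑ j, X j : MvPolynomial (Fin n) ℕ) ^ d * X i) := hterm
      _ ≤ ∑ j, coeff β ((∑ k, X k : MvPolynomial (Fin n) ℕ) ^ d * X j) :=
        Finset.single_le_sum (f := fun j => coeff β ((∑ k, X k : MvPolynomial (Fin n) ℕ) ^ d * X j))
          (fun j _ => Nat.zero_le _) (Finset.mem_univ i)

lemma coeff_sum_X_pow_ne_zero (d : ℕ) (β : Fin n →₀ ℕ) (h : (β.sum fun _ e => e) = d) :
    coeff β ((∑ i, X i : MvPolynomial (Fin n) ℂ) ^ d) ≠ 0 := by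
  have hmap : ((∑ i, X i : MvPolynomial (Fin n) ℂ) ^ d) =
      MvPolynomial.map (Nat.castRingHom ℂ) ((∑ i, X i : MvPolynomial (Fin n) ℕ) ^ d) := by
    simp
  rw [hmap, coeff_map]
  have := coeff_sum_X_pow_pos d β h
  simp only [Nat.castRingHom, RingHom.coe_mk, MonoidHom.coe_mk, OneHom.coe_mk]
  exact (Nat.cast_ne_zero (R := ℂ)).mpr this.ne'

lemma coeff_sum_X_pow_eq_zero (d : ℕ) (β : Fin n →₀ ℕ) (h : (β.sum fun _ e => e) ≠ d) :
    coeff β ((∑ i, X i : MvPolynomial (Fin n) ℂ) ^ d) = 0 := by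
  have hhom : ((∑ i, X i : MvPolynomial (Fin n) ℂ) ^ d).IsHomogeneous d := by
    have : (∑ i, X i : MvPolynomial (Fin n) ℂ).IsHomogeneous 1 :=
      IsHomogeneous.sum _ _ _ fun i _ => isHomogeneous_X _ _
    simpa using this.pow d
  exact hhom.coeff_eq_zero (by exact h)

end coeffpow

noncomputable section psi

variable {n : ℕ}

/-- Substitution `X i ↦ (glAct M (X i)) · u_i` into polynomials in auxiliary variables `u`. -/
def psi (M : Matrix.GeneralLinearGroup (Fin n) ℝ) :
    MvPolynomial (Fin n) ℂ →ₐ[ℂ] MvPolynomial (Fin n) (MvPolynomial (Fin n) ℂ) :=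
  aeval (fun i => (C (glAct M (X i)) : MvPolynomial (Fin n) (MvPolynomial (Fin n) ℂ)) * X i)

lemma glAct_monomial_one (M : Matrix.GeneralLinearGroup (Fin n) ℝ) (α : Fin n →₀ ℕ) :
    glAct M (monomial α (1 : ℂ)) = α.prod fun i e => (glAct M (X i)) ^ e := by
  rw [monomial_eq, _root_.map_mul, MvPolynomial.C_1, _root_.map_one, one_mul, map_finsuppProd]
  simp only [_root_.map_pow]

lemma psi_monomial (M : Matrix.GeneralLinearGroup (Fin n) ℝ) (α : Fin n →₀ ℕ) (c : ℂ) :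
    psi M (monomial α c) = monomial α (c • glAct M (monomial α 1)) := by
  have hy : ∀ a : Fin n, psi M (X a) =
      (C (glAct M (X a)) : MvPolynomial (Fin n) (MvPolynomial (Fin n) ℂ)) * X a :=
    fun a => aeval_X _ a
  have hC : psi M (C c) = C (C c) := by
    simp only [psi, aeval_C]
    rw [show (algebraMap ℂ (MvPolynomial (Fin n) (MvPolynomial (Fin n) ℂ))) c
      = C (algebraMap ℂ (MvPolynomial (Fin n) ℂ) c) from rfl, algebraMap_eq]
  rw [monomial_eq, _root_.map_mul, map_finsuppProd, hC]
  simp only [Finsupp.prod, _root_.map_pow, hy, mul_pow]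
  rw [Finset.prod_mul_distrib]
  simp only [← C_pow]
  rw [← map_prod (C : MvPolynomial (Fin n) ℂ →+* _), ← mul_assoc, ← _root_.map_mul]
  rw [glAct_monomial_one, smul_eq_C_mul, monomial_eq]
  rfl

lemma coeff_psi (M : Matrix.GeneralLinearGroup (Fin n) ℝ) (f : MvPolynomial (Fin n) ℂ)
    (β : Fin n →₀ ℕ) :
    coeff β (psi M f) = coeff β f • glAct M (monomial β 1) := by
  conv_lhs => rw [f.as_sum]
  rw [map_sum, MvPolynomial.coeff_sum]
  simp only [psi_monomial, coeff_monomial]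
  rw [Finset.sum_ite_eq' f.support β fun α => coeff α f • glAct M (monomial α 1)]
  by_cases hβ : β ∈ f.support
  · rw [if_pos hβ]
  · rw [if_neg hβ, MvPolynomial.notMem_support_iff.mp hβ, zero_smul]

lemma psi_sum_X (M : Matrix.GeneralLinearGroup (Fin n) ℝ) :
    psi M (∑ i, X i) = ∑ i, (C (glAct M (X i)) : MvPolynomial (Fin n) (MvPolynomial (Fin n) ℂ)) * X i := by
  simp [psi]

end psi

noncomputable section main

variable (n : ℕ) (G : Subgroup (Matrix.GeneralLinearGroup (Fin n) ℝ)) [Fintype G]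

/-- The Reynolds averages of monomials of degree at most `|G|`. -/
def genSet : Set (MvPolynomial (Fin n) ℂ) :=
  {q : MvPolynomial (Fin n) ℂ | ∃ α : Fin n →₀ ℕ,
    (α.sum fun _ e => e) ≤ Nat.card G ∧
    q = ((Nat.card G : ℂ))⁻¹ • ∑ M : G,
      glAct (M : Matrix.GeneralLinearGroup (Fin n) ℝ) (MvPolynomial.monomial α (1 : ℂ))}

lemma card_ne_zero : ((Nat.card G : ℂ)) ≠ 0 := by
  have : Nat.card G ≠ 0 := Nat.card_ne_zero.2 ⟨⟨1, Subgroup.one_mem G⟩, inferInstance⟩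
  exact_mod_cast this

lemma sum_glAct_monomial_mem (α : Fin n →₀ ℕ) (h : (α.sum fun _ e => e) ≤ Nat.card G) :
    (∑ M : G, glAct (M : Matrix.GeneralLinearGroup (Fin n) ℝ) (monomial α (1 : ℂ)))
      ∈ Algebra.adjoin ℂ (genSet n G) := by
  have hgen : ((Nat.card G : ℂ))⁻¹ • ∑ M : G,
      glAct (M : Matrix.GeneralLinearGroup (Fin n) ℝ) (monomial α (1 : ℂ)) ∈ genSet n G :=
    ⟨α, h, rfl⟩
  have := Subalgebra.smul_mem (Algebra.adjoin ℂ (genSet n G))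
    (Algebra.subset_adjoin hgen) ((Nat.card G : ℂ))
  rwa [smul_inv_smul₀ (card_ne_zero n G)] at this

/-- the basic polynomials whose power sums will be analysed -/
def bb : G → MvPolynomial (Fin n) (MvPolynomial (Fin n) ℂ) :=
  fun M => psi (M : Matrix.GeneralLinearGroup (Fin n) ℝ) (∑ i, X i)

lemma coeff_sum_bb_pow (k : ℕ) (β : Fin n →₀ ℕ) :
    coeff β (∑ M : G, bb n G M ^ k) =
      coeff β ((∑ i, X i : MvPolynomial (Fin n) ℂ) ^ k) •
        ∑ M : G, glAct (M : Matrix.GeneralLinearGroup (Fin n) ℝ) (monomial β (1 : ℂ)) := by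
  rw [MvPolynomial.coeff_sum]
  have : ∀ M : G, coeff β (bb n G M ^ k) =
      coeff β ((∑ i, X i : MvPolynomial (Fin n) ℂ) ^ k) •
        glAct (M : Matrix.GeneralLinearGroup (Fin n) ℝ) (monomial β (1 : ℂ)) := by
    intro M
    rw [bb, ← _root_.map_pow, coeff_psi]
  rw [Finset.sum_congr rfl fun M _ => this M, ← Finset.smul_sum]

lemma coeff_mem_of_mem_adjoin_psum {q : MvPolynomial (Fin n) (MvPolynomial (Fin n) ℂ)}
    (hq : q ∈ Algebra.adjoin ℂ (psumSet (bb n G))) (β : Fin n →₀ ℕ) :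
    coeff β q ∈ Algebra.adjoin ℂ (genSet n G) := by
  classical
  induction hq using Algebra.adjoin_induction generalizing β with
  | mem x hx =>
    obtain ⟨j, hj1, hj2, rfl⟩ := hx
    rw [show (∑ i : G, bb n G i ^ j) = ∑ M : G, bb n G M ^ j from rfl,
      coeff_sum_bb_pow]
    by_cases hdeg : (β.sum fun _ e => e) = j
    · exact Subalgebra.smul_mem _ (sum_glAct_monomial_mem n G β
        (by rw [hdeg, ← Nat.card_eq_fintype_card] at *; omega)) _
    · rw [coeff_sum_X_pow_eq_zero j β hdeg, zero_smul]
      exact Subalgebra.zero_mem _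
  | algebraMap r =>
    rw [show (algebraMap ℂ (MvPolynomial (Fin n) (MvPolynomial (Fin n) ℂ))) r
      = C (C r) from rfl, coeff_C]
    split
    · exact Subalgebra.algebraMap_mem _ r
    · exact Subalgebra.zero_mem _
  | add x y hx hy ihx ihy => rw [coeff_add]; exact Subalgebra.add_mem _ (ihx β) (ihy β)
  | mul x y hx hy ihx ihy =>
    rw [coeff_mul]
    exact Subalgebra.sum_mem _ fun c _ => Subalgebra.mul_mem _ (ihx c.1) (ihy c.2)

lemma sum_glAct_monomial_mem_all (α : Fin n →₀ ℕ) :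
    (∑ M : G, glAct (M : Matrix.GeneralLinearGroup (Fin n) ℝ) (monomial α (1 : ℂ)))
      ∈ Algebra.adjoin ℂ (genSet n G) := by
  classical
  set d := α.sum fun _ e => e with hd
  have hq : (∑ M : G, bb n G M ^ d) ∈ Algebra.adjoin ℂ (psumSet (bb n G)) :=
    aux_psum_mem (bb n G) d
  have h1 := coeff_mem_of_mem_adjoin_psum n G hq α
  rw [coeff_sum_bb_pow] at h1
  have hc : coeff α ((∑ i, X i : MvPolynomial (Fin n) ℂ) ^ d) ≠ 0 :=
    coeff_sum_X_pow_ne_zero d α hd.symm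
  have := Subalgebra.smul_mem _ h1 (coeff α ((∑ i, X i : MvPolynomial (Fin n) ℂ) ^ d))⁻¹
  rwa [inv_smul_smul₀ hc] at this

end main

noncomputable section final

variable (n : ℕ) (G : Subgroup (Matrix.GeneralLinearGroup (Fin n) ℝ)) [Fintype G]

lemma glAct_sum_reindex (M : Matrix.GeneralLinearGroup (Fin n) ℝ) (hM : M ∈ G)
    (f : MvPolynomial (Fin n) ℂ) :
    ∑ N : G, glAct ((((⟨M, hM⟩ : G) * N : G)) : Matrix.GeneralLinearGroup (Fin n) ℝ) f
      = ∑ N : G, glAct (N : Matrix.GeneralLinearGroup (Fin n) ℝ) f :=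
  Equiv.sum_comp (Equiv.mulLeft (⟨M, hM⟩ : G))
    (fun N : G => glAct (N : Matrix.GeneralLinearGroup (Fin n) ℝ) f)

lemma gen_invariant (M : Matrix.GeneralLinearGroup (Fin n) ℝ) (hM : M ∈ G)
    {q : MvPolynomial (Fin n) ℂ} (hq : q ∈ genSet n G) : glAct M q = q := by
  obtain ⟨α, -, rfl⟩ := hq
  rw [_root_.map_smul, map_sum]
  congr 1
  have : ∀ N : G, glAct M (glAct (N : Matrix.GeneralLinearGroup (Fin n) ℝ)
      (monomial α (1:ℂ))) = glAct ((((⟨M, hM⟩ : G) * N : G)) :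
        Matrix.GeneralLinearGroup (Fin n) ℝ) (monomial α (1:ℂ)) := by
    intro N
    rw [glAct_mul]
    rfl
  rw [Finset.sum_congr rfl fun N _ => this N, glAct_sum_reindex n G M hM]

end final

noncomputable section thm

/-- Noether's degree bound: for a finite group `G ≤ GL(n,ℝ)` of order
`g = |G|`, the invariant ring `ℂ[x₁,…,xₙ]^G` is generated as a `ℂ`-algebra by the
Reynolds averages `(1/g) Σ_{M∈G} M·f` of the monomials `f` of degree at most `g`. -/
theorem stmt16 (n : ℕ) (G : Subgroup (Matrix.GeneralLinearGroup (Fin n) ℝ)) [Finite G] :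
    haveI : Fintype G := Fintype.ofFinite G
    ∀ P : MvPolynomial (Fin n) ℂ,
      (∀ M ∈ G, glAct M P = P) ↔
      P ∈ Algebra.adjoin ℂ
        {q : MvPolynomial (Fin n) ℂ | ∃ α : Fin n →₀ ℕ,
          (α.sum fun _ e => e) ≤ Nat.card G ∧
          q = ((Nat.card G : ℂ))⁻¹ • ∑ M : G,
            glAct (M : Matrix.GeneralLinearGroup (Fin n) ℝ)
              (MvPolynomial.monomial α (1 : ℂ))} := by
  letI : Fintype G := Fintype.ofFinite G
  intro P
  show (∀ M ∈ G, glAct M P = P) ↔ P ∈ Algebra.adjoin ℂ (genSet n G)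
  constructor
  · -- invariant → in adjoin
    intro hP
    have hsum : ∑ M : G, glAct (M : Matrix.GeneralLinearGroup (Fin n) ℝ) P
        ∈ Algebra.adjoin ℂ (genSet n G) := by
      have hexp : ∀ M : G, glAct (M : Matrix.GeneralLinearGroup (Fin n) ℝ) P =
          ∑ α ∈ P.support, coeff α P •
            glAct (M : Matrix.GeneralLinearGroup (Fin n) ℝ) (monomial α (1:ℂ)) := by
        intro M
        conv_lhs => rw [P.as_sum]
        rw [map_sum]
        refine Finset.sum_congr rfl fun α _ => ?_
        rw [show (monomial α) (coeff α P) = coeff α P • monomial α (1:ℂ) by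
          rw [smul_monomial, smul_eq_mul, mul_one], _root_.map_smul]
      rw [Finset.sum_congr rfl fun M _ => hexp M, Finset.sum_comm]
      refine Subalgebra.sum_mem _ fun α _ => ?_
      rw [← Finset.smul_sum]
      exact Subalgebra.smul_mem _ (sum_glAct_monomial_mem_all n G α) _
    have heq : ∑ M : G, glAct (M : Matrix.GeneralLinearGroup (Fin n) ℝ) P
        = (Nat.card G : ℂ) • P := by
      have h' : ∀ M : G, glAct (M : Matrix.GeneralLinearGroup (Fin n) ℝ) P = P :=
        fun M => hP (↑M) (SetLike.coe_mem M)
      rw [Finset.sum_congr rfl fun M _ => h' M, Finset.sum_const, Finset.card_univ,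
        ← Nat.card_eq_fintype_card, Nat.cast_smul_eq_nsmul]
    rw [heq] at hsum
    have := Subalgebra.smul_mem _ hsum ((Nat.card G : ℂ))⁻¹
    rwa [inv_smul_smul₀ (card_ne_zero n G)] at this
  · -- in adjoin → invariant
    intro hP M hM
    have hsub : genSet n G ⊆ (AlgHom.equalizer (glAct M)
        (AlgHom.id ℂ (MvPolynomial (Fin n) ℂ)) : Subalgebra ℂ (MvPolynomial (Fin n) ℂ)) :=
      fun q hq => gen_invariant n G M hM hq
    exact Algebra.adjoin_le hsub hP

end thm
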